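/- For any integers b, k ≥ 0 and any i with 1 ≤ i ≤ b−1 such that all quantum integers appearing are nonzero, the following sum formula holds: Σ_{a=0}^{k} ([a+i−1]! [b−i+a−1]!)/([a]! [a+b]!) = (1/([i][b−i])) · ([i+k]! [b+k−i]!)/([k]! [b+k]!). -/

import Mathlib

/-- The quantum integer `[m]`, with the convention `[m] = m·q^(m-1)` when `q = ±1`. -/
noncomputable def qint (q : ℂ) (m : ℤ) : ℂ :=
  if q ^ 2 = 1 then (m : ℂ) * q ^ (m - 1)
  else (q ^ m - q ^ (-m)) / (q - q⁻¹)

/-- The quantum factorial `[m]! = [1][2]⋯[m]`, with `[0]! = 1`. -/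
noncomputable def qfact (q : ℂ) : ℕ → ℂ
  | 0 => 1
  | n + 1 => qfact q n * qint q ((n : ℤ) + 1)

/-!
The sum telescopes. Write `j = i - 1`, `l = b - i - 1` and let `R k` be the right-hand side.
Then `R (k + 1) - R k` is the `(k + 1)`-st summand because of the quantum analogue
`[x + y][y + z] = [y][x + y + z] + [x][z]` of `(x + y)(y + z) = y(x + y + z) + xz`, applied to
`x = j + 1`, `y = k + 1`, `z = l + 1`.
-/

theorem qint_add_mul_qint_add (q : ℂ) (x y z : ℤ) :
    qint q (x + y) * qint q (y + z) = qint q y * qint q (x + y + z) + qint q x * qint q z := by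
  rcases eq_or_ne q 0 with rfl | hq
  · simp [qint]
  by_cases hq2 : q ^ 2 = 1
  · have hy : (q ^ y) ^ 2 = 1 := by
      rw [← zpow_natCast, ← zpow_mul, mul_comm, zpow_mul]; simp [hq2]
    simp only [qint, if_pos hq2, zpow_sub₀ hq, zpow_add₀ hq, zpow_one]
    push_cast
    linear_combination (x * z * q ^ x * q ^ z / q ^ 2 : ℂ) * hy
  · simp only [qint, if_neg hq2, zpow_add₀ hq, zpow_neg]
    field_simp
    ring

lemma qfact_succ (q : ℂ) (n : ℕ) : qfact q (n + 1) = qfact q n * qint q ((n : ℤ) + 1) := rfl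

lemma qint_succ_ne_zero {q : ℂ} (hq : ∀ m : ℕ, 1 ≤ m → qint q m ≠ 0) (n : ℕ) :
    qint q ((n : ℤ) + 1) ≠ 0 := by
  exact_mod_cast hq (n + 1) n.succ_pos

lemma qfact_ne_zero {q : ℂ} (hq : ∀ m : ℕ, 1 ≤ m → qint q m ≠ 0) (n : ℕ) : qfact q n ≠ 0 := by
  induction n with
  | zero => exact one_ne_zero
  | succ n ih => exact mul_ne_zero ih (qint_succ_ne_zero hq n)

theorem sum_range_qfact_div {q : ℂ} (hq : ∀ m : ℕ, 1 ≤ m → qint q m ≠ 0) (j l k : ℕ) :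
    ∑ a ∈ Finset.range (k + 1),
        qfact q (a + j) * qfact q (a + l) / (qfact q a * qfact q (a + j + l + 2)) =
      qfact q (k + j + 1) * qfact q (k + l + 1) /
        (qint q ((j : ℤ) + 1) * qint q ((l : ℤ) + 1) * qfact q k * qfact q (k + j + l + 2)) := by
  induction k with
  | zero =>
    simp only [Finset.sum_range_one, zero_add, qfact_succ q j, qfact_succ q l]
    field_simp [qint_succ_ne_zero hq, qfact_ne_zero hq]
  | succ k ih =>
    rw [Finset.sum_range_succ, ih, show k + 1 + j = k + j + 1 by ring,
      show k + 1 + l = k + l + 1 by ring, show k + j + 1 + l + 2 = k + j + l + 2 + 1 by ring,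
      qfact_succ q (k + j + 1), qfact_succ q (k + l + 1), qfact_succ q (k + j + l + 2),
      qfact_succ q k]
    have key := qint_add_mul_qint_add q ((j : ℤ) + 1) ((k : ℤ) + 1) ((l : ℤ) + 1)
    have h1 := qint_succ_ne_zero hq j
    have h2 := qint_succ_ne_zero hq l
    have h3 := qint_succ_ne_zero hq k
    have h4 := qint_succ_ne_zero hq (k + j + l + 2)
    have h5 := qfact_ne_zero hq k
    have h6 := qfact_ne_zero hq (k + j + l + 2)
    clear ih
    push_cast at *
    ring_nf at *
    field_simp
    linear_combination (-(qfact q (1 + k + j) * qfact q (1 + k + l))) * key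

theorem quantum_sum_formula_general (q : ℂ)
    (hgen : ∀ m : ℕ, 1 ≤ m → qint q (m : ℤ) ≠ 0)
    (b k i : ℕ) (hi1 : 1 ≤ i) (hi2 : i ≤ b - 1) :
    ∑ a ∈ Finset.range (k + 1),
        qfact q (a + i - 1) * qfact q (b - i + a - 1) / (qfact q a * qfact q (a + b)) =
      1 / (qint q (i : ℤ) * qint q ((b : ℤ) - (i : ℤ))) *
        (qfact q (i + k) * qfact q (b + k - i) / (qfact q k * qfact q (b + k))) := by
  obtain ⟨j, rfl⟩ : ∃ j, i = j + 1 := ⟨i - 1, by omega⟩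
  obtain ⟨l, rfl⟩ : ∃ l, b = j + l + 2 := ⟨b - j - 2, by omega⟩
  calc _ = ∑ a ∈ Finset.range (k + 1),
        qfact q (a + j) * qfact q (a + l) / (qfact q a * qfact q (a + j + l + 2)) :=
        Finset.sum_congr rfl fun a _ => by congr 3 <;> omega
    _ = _ := sum_range_qfact_div hgen j l k
    _ = _ := by
      rw [show j + 1 + k = k + j + 1 by omega, show j + l + 2 + k - (j + 1) = k + l + 1 by omega,
        show j + l + 2 + k = k + j + l + 2 by omega]
      push_cast
      rw [show (j : ℤ) + l + 2 - (j + 1) = l + 1 by ring]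
      ring

/-- the quantum summation formula
`Σ_(a=0)^k [a+i-1]!][b-i+a-1]!/([a]![a+b]!) = (1/([i][b-i]))·[i+k]![b+k-i]!/([k]![b+k]!)`
for `b, k ≥ 0` and `1 ≤ i ≤ b-1`, with all quantum integers nonzero
(`q` not a root of unity). -/
theorem quantum_sum_formula (q : ℂ) (hq : q ≠ 0) (hq2 : q ^ 2 ≠ 1)
    (hgen : ∀ m : ℕ, 1 ≤ m → qint q (m : ℤ) ≠ 0)
    (b k i : ℕ) (hi1 : 1 ≤ i) (hi2 : i ≤ b - 1) :
    ∑ a ∈ Finset.range (k + 1),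
        qfact q (a + i - 1) * qfact q (b - i + a - 1) / (qfact q a * qfact q (a + b)) =
      1 / (qint q (i : ℤ) * qint q ((b : ℤ) - (i : ℤ))) *
        (qfact q (i + k) * qfact q (b + k - i) / (qfact q k * qfact q (b + k))) :=
  quantum_sum_formula_general q hgen b k i hi1 hi2
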